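/- Let H be a quasi-Hopf algebra in the sense of Drinfeld (bijective antipode) which is semisimple as an algebra. Then H is finite dimensional. -/

import Mathlib

set_option autoImplicit false

open TensorProduct

/-- A quasi-bialgebra in the sense of Drinfeld. The reassociator `Phi` lives in
`H ⊗ (H ⊗ H)`, and `(Δ ⊗ id)` is transported along the associator. -/
structure QuasiBialgebra (k H : Type*) [Field k] [Ring H] [Algebra k H] where
  comul : H →ₐ[k] H ⊗[k] H
  counit : H →ₐ[k] k
  Phi : H ⊗[k] (H ⊗[k] H)
  PhiInv : H ⊗[k] (H ⊗[k] H)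
  Phi_invertible : Phi * PhiInv = 1
  invertible_Phi : PhiInv * Phi = 1
  quasi_coassoc : ∀ h : H,
    (Algebra.TensorProduct.map (AlgHom.id k H) comul) (comul h) * Phi
      = Phi * (Algebra.TensorProduct.assoc k k k H H H)
          ((Algebra.TensorProduct.map comul (AlgHom.id k H)) (comul h))
  counit_right : ∀ h : H,
    (Algebra.TensorProduct.map (AlgHom.id k H) counit) (comul h) = h ⊗ₜ[k] 1
  counit_left : ∀ h : H,
    (Algebra.TensorProduct.map counit (AlgHom.id k H)) (comul h) = 1 ⊗ₜ[k] h
  pentagon :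
    (1 ⊗ₜ[k] Phi)
      * (Algebra.TensorProduct.map (AlgHom.id k H)
          ((Algebra.TensorProduct.assoc k k k H H H).toAlgHom.comp
            (Algebra.TensorProduct.map comul (AlgHom.id k H)))) Phi
      * (Algebra.TensorProduct.map (AlgHom.id k H)
            (Algebra.TensorProduct.assoc k k k H H H).toAlgHom)
          ((Algebra.TensorProduct.assoc k k k H (H ⊗[k] H) H) (Phi ⊗ₜ[k] 1))
    = (Algebra.TensorProduct.map (AlgHom.id k H)
        (Algebra.TensorProduct.map (AlgHom.id k H) comul)) Phi
      * (Algebra.TensorProduct.assoc k k k H H (H ⊗[k] H))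
          ((Algebra.TensorProduct.map comul (AlgHom.id k (H ⊗[k] H))) Phi)
  counit_mid_Phi :
    (Algebra.TensorProduct.map (AlgHom.id k H)
      (Algebra.TensorProduct.map counit (AlgHom.id k H))) Phi = 1

/-- A quasi-Hopf algebra: a quasi-bialgebra with an algebra anti-homomorphism `S`
and elements `alpha`, `beta` satisfying Drinfeld's antipode axioms.  Bijectivity
of `S` is *not* assumed. -/
structure QuasiHopfAlgebra (k H : Type*) [Field k] [Ring H] [Algebra k H] extends
    QuasiBialgebra k H where
  S : H →ₗ[k] H
  alpha : H
  beta : H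
  S_one : S 1 = 1
  S_mul : ∀ a b : H, S (a * b) = S b * S a
  antipode_left : ∀ h : H,
    (LinearMap.mul' k H)
      ((TensorProduct.map ((LinearMap.mulRight k alpha) ∘ₗ S) LinearMap.id) (comul h))
      = counit h • alpha
  antipode_right : ∀ h : H,
    (LinearMap.mul' k H)
      ((TensorProduct.map LinearMap.id ((LinearMap.mulLeft k beta) ∘ₗ S)) (comul h))
      = counit h • beta
  antipode_Phi :
    (LinearMap.mul' k H)
      ((TensorProduct.map LinearMap.id
        ((LinearMap.mul' k H) ∘ₗ (TensorProduct.map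
          ((LinearMap.mulRight k alpha) ∘ₗ ((LinearMap.mulLeft k beta) ∘ₗ S))
          LinearMap.id))) Phi) = 1
  antipode_PhiInv :
    (LinearMap.mul' k H)
      ((TensorProduct.map ((LinearMap.mulRight k alpha) ∘ₗ S)
        ((LinearMap.mul' k H) ∘ₗ (TensorProduct.map (LinearMap.mulRight k beta) S)))
        PhiInv) = 1

namespace QuasiHopfAlgebra

variable {k H : Type*} [Field k] [Ring H] [Algebra k H] (Q : QuasiHopfAlgebra k H)

/-- The space of left integrals in `H`. -/
def leftIntegrals : Submodule k H where
  carrier := {t | ∀ h : H, h * t = Q.counit h • t}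
  add_mem' := by intro a b ha hb h; rw [mul_add, ha h, hb h, smul_add]
  zero_mem' := by intro h; simp
  smul_mem' := by intro c x hx h; rw [mul_smul_comm, hx h, smul_comm]

/-- The space of right integrals in `H`. -/
def rightIntegrals : Submodule k H where
  carrier := {t | ∀ h : H, t * h = Q.counit h • t}
  add_mem' := by intro a b ha hb h; rw [add_mul, ha h, hb h, smul_add]
  zero_mem' := by intro h; simp
  smul_mem' := by intro c x hx h; rw [smul_mul_assoc, hx h, smul_comm]

/-- The element `p_R = ∑ x¹ ⊗ x² β S(x³)`. -/
noncomputable def pR : H ⊗[k] H :=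
  (TensorProduct.map LinearMap.id
    ((LinearMap.mul' k H) ∘ₗ (TensorProduct.map (LinearMap.mulRight k Q.beta) Q.S)))
    Q.PhiInv

/-- The element `∑ X¹ t₁ ⊗ S(X² t₂) α X³` built from a (left integral) `t`. -/
noncomputable def Tel (t : H) : H ⊗[k] H :=
  (TensorProduct.map LinearMap.id
    ((LinearMap.mul' k H) ∘ₗ
      (TensorProduct.map ((LinearMap.mulRight k Q.alpha) ∘ₗ Q.S) LinearMap.id)))
    (Q.Phi * (Algebra.TensorProduct.assoc k k k H H H) (Q.comul t ⊗ₜ[k] 1))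

end QuasiHopfAlgebra

/-!
Semisimplicity of `H` splits off the kernel of the counit as `H e` with `e` idempotent, so
`t = 1 - e` is a left integral with `ε t = 1`. From it one builds
`T = X¹ t₁ ⊗ S(X² t₂) α X³ ∈ H ⊗ H`, which satisfies `T (1 ⊗ h) = (h ⊗ 1) T` by
quasi-coassociativity, and `∑ T¹ β T² = ε(t) = 1` by the antipode axioms. If `T` lies in
`A ⊗ B` with `A`, `B` finite dimensional, then `(h ⊗ 1) T` lies both in `H ⊗ B` and in
`A ⊗ H`, hence in `A ⊗ B`, and `h = ∑ h T¹ β T²` is the image of an element of `A ⊗ B`.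
-/

theorem TensorProduct.mem_range_mapIncl_of_mem_range_rTensor_of_mem_range_lTensor
    {k M N : Type*} [Field k] [AddCommGroup M] [Module k M] [AddCommGroup N] [Module k N]
    {A : Submodule k M} {B : Submodule k N} {x : M ⊗[k] N}
    (hA : x ∈ LinearMap.range (A.subtype.rTensor N))
    (hB : x ∈ LinearMap.range (B.subtype.lTensor M)) :
    x ∈ LinearMap.range (mapIncl A B) := by
  obtain ⟨pA, hpA⟩ := A.subtype.exists_leftInverse_of_injective A.ker_subtype
  obtain ⟨pB, hpB⟩ := B.subtype.exists_leftInverse_of_injective B.ker_subtype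
  have fixA : (A.subtype ∘ₗ pA).rTensor N x = x := by
    obtain ⟨y, rfl⟩ := hA
    rw [← LinearMap.comp_apply, ← LinearMap.rTensor_comp, LinearMap.comp_assoc, hpA,
      LinearMap.comp_id]
  have fixB : (B.subtype ∘ₗ pB).lTensor M x = x := by
    obtain ⟨y, rfl⟩ := hB
    rw [← LinearMap.comp_apply, ← LinearMap.lTensor_comp, LinearMap.comp_assoc, hpB,
      LinearMap.comp_id]
  refine ⟨map pA pB x, ?_⟩
  rw [mapIncl, ← LinearMap.comp_apply, ← map_comp, ← LinearMap.rTensor_comp_lTensor,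
    LinearMap.comp_apply, fixB, fixA]

namespace Algebra.TensorProduct

variable {R A B : Type*} [CommSemiring R] [Semiring A] [Semiring B] [Algebra R A] [Algebra R B]

theorem tmul_one_mul_eq_rTensor (a : A) (x : A ⊗[R] B) :
    (a ⊗ₜ[R] (1 : B)) * x = (LinearMap.mulLeft R a).rTensor B x := by
  induction x using TensorProduct.induction_on with
  | zero => simp
  | tmul b c => simp [tmul_mul_tmul]
  | add x y hx hy => rw [mul_add, hx, hy, map_add]

theorem mul_one_tmul_eq_lTensor (b : B) (x : A ⊗[R] B) :
    x * ((1 : A) ⊗ₜ[R] b) = (LinearMap.mulRight R b).lTensor A x := by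
  induction x using TensorProduct.induction_on with
  | zero => simp
  | tmul a c => simp [tmul_mul_tmul]
  | add x y hx hy => rw [add_mul, hx, hy, map_add]

end Algebra.TensorProduct

theorem finiteDimensional_of_tmul_one_mul_eq_mul_one_tmul {k A : Type*} [Field k] [Ring A]
    [Algebra k A] (T : A ⊗[k] A) (L : A ⊗[k] A →ₗ[k] A)
    (hT : ∀ a : A, (a ⊗ₜ[k] 1) * T = T * (1 ⊗ₜ[k] a))
    (hL : ∀ a : A, L ((a ⊗ₜ[k] 1) * T) = a) :
    FiniteDimensional k A := by
  obtain ⟨M, N, _, _, hMN⟩ :=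
    TensorProduct.exists_finite_submodule_of_setFinite {T} (Set.finite_singleton T)
  obtain ⟨z, hz⟩ := hMN rfl
  have hmem : ∀ a : A, (a ⊗ₜ[k] 1) * T ∈ LinearMap.range (mapIncl M N) := by
    intro a
    refine mem_range_mapIncl_of_mem_range_rTensor_of_mem_range_lTensor ?_ ?_
    · rw [hT, ← hz, Algebra.TensorProduct.mul_one_tmul_eq_lTensor, mapIncl,
        ← LinearMap.comp_apply, LinearMap.lTensor_comp_map, ← LinearMap.rTensor_comp_lTensor,
        LinearMap.comp_apply]
      exact LinearMap.mem_range_self _ _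
    · rw [← hz, Algebra.TensorProduct.tmul_one_mul_eq_rTensor, mapIncl,
        ← LinearMap.comp_apply, LinearMap.rTensor_comp_map, ← LinearMap.lTensor_comp_rTensor,
        LinearMap.comp_apply]
      exact LinearMap.mem_range_self _ _
  refine Module.Finite.of_surjective (L ∘ₗ mapIncl M N) fun a => ?_
  obtain ⟨y, hy⟩ := hmem a
  exact ⟨y, by rw [LinearMap.comp_apply, hy, hL]⟩

theorem IsSemisimpleRing.exists_mul_eq_smul_self_of_algHom {k A : Type*} [CommRing k] [Ring A]
    [Algebra k A] [IsSemisimpleRing A] (ε : A →ₐ[k] k) :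
    ∃ t : A, ε t = 1 ∧ ∀ a : A, a * t = ε a • t := by
  obtain ⟨e, he, hker⟩ := IsSemisimpleRing.ideal_eq_span_idempotent (RingHom.ker ε)
  have hεe : ε e = 0 := (hker ▸ Ideal.subset_span rfl : e ∈ RingHom.ker ε)
  refine ⟨1 - e, by rw [map_sub, map_one, hεe, sub_zero], fun a => ?_⟩
  have hmem : a - algebraMap k A (ε a) ∈ Ideal.span {e} := by
    rw [← hker, RingHom.mem_ker, map_sub, AlgHom.commutes, Algebra.algebraMap_self,
      RingHom.id_apply, sub_self]
  obtain ⟨r, hr⟩ := Ideal.mem_span_singleton'.1 hmem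
  rw [Algebra.smul_def, ← sub_eq_zero, ← sub_mul, ← hr, mul_assoc, mul_sub, mul_one, he.eq,
    sub_self, mul_zero]

namespace QuasiHopfAlgebra

variable {k H : Type*} [Field k] [Ring H] [Algebra k H] (Q : QuasiHopfAlgebra k H)

noncomputable def sAlphaMul : H ⊗[k] H →ₗ[k] H :=
  LinearMap.mul' k H ∘ₗ (LinearMap.mulRight k Q.alpha ∘ₗ Q.S).rTensor H

@[simp] theorem sAlphaMul_tmul (x y : H) : Q.sAlphaMul (x ⊗ₜ y) = Q.S x * Q.alpha * y := by
  simp [sAlphaMul]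

noncomputable def betaMul : H ⊗[k] H →ₗ[k] H :=
  LinearMap.mul' k H ∘ₗ (LinearMap.mulRight k Q.beta).rTensor H

@[simp] theorem betaMul_tmul (x y : H) : Q.betaMul (x ⊗ₜ y) = x * Q.beta * y := by
  simp [betaMul]

noncomputable def phiContract : H ⊗[k] (H ⊗[k] H) →ₗ[k] H :=
  LinearMap.mul' k H ∘ₗ Q.sAlphaMul.lTensor H

@[simp] theorem phiContract_tmul (x y z : H) :
    Q.phiContract (x ⊗ₜ (y ⊗ₜ z)) = x * (Q.S y * Q.alpha * z) := by
  simp [phiContract]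

theorem Tel_eq_lTensor (t : H) :
    Q.Tel t = Q.sAlphaMul.lTensor H
      (Q.Phi * Algebra.TensorProduct.assoc k k k H H H (Q.comul t ⊗ₜ 1)) := rfl

theorem sAlphaMul_mul_tmul (v : H ⊗[k] H) (y z : H) :
    Q.sAlphaMul (v * (y ⊗ₜ z)) = Q.S y * Q.sAlphaMul v * z := by
  induction v using TensorProduct.induction_on with
  | zero => simp
  | tmul a b => simp [Algebra.TensorProduct.tmul_mul_tmul, Q.S_mul, mul_assoc]
  | add u v hu hv => rw [add_mul, map_add, hu, hv, map_add, mul_add, add_mul]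

theorem sAlphaMul_comul_mul (b : H) (w : H ⊗[k] H) :
    Q.sAlphaMul (Q.comul b * w) = Q.counit b • Q.sAlphaMul w := by
  induction w using TensorProduct.induction_on with
  | zero => simp
  | tmul y z =>
    have hb : Q.sAlphaMul (Q.comul b) = Q.counit b • Q.alpha := Q.antipode_left b
    rw [sAlphaMul_mul_tmul, hb, sAlphaMul_tmul, mul_smul_comm, smul_mul_assoc]
  | add u v hu hv => rw [mul_add, map_add, hu, hv, map_add, smul_add]

theorem lTensor_sAlphaMul_mul_one_tmul (U : H ⊗[k] (H ⊗[k] H)) (h : H) :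
    Q.sAlphaMul.lTensor H U * (1 ⊗ₜ h)
      = Q.sAlphaMul.lTensor H (U * (1 ⊗ₜ (1 ⊗ₜ h))) := by
  induction U using TensorProduct.induction_on with
  | zero => simp
  | tmul x w =>
    simp only [LinearMap.lTensor_tmul, Algebra.TensorProduct.tmul_mul_tmul, mul_one,
      sAlphaMul_mul_tmul, Q.S_one, one_mul]
  | add u v hu hv => rw [map_add, add_mul, add_mul, hu, hv, map_add]

/-- Since `S(h₁) α h₂ = ε(h) α`, the factor `(id ⊗ Δ) Δ(h)` only contributes `h ⊗ 1`. -/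
theorem lTensor_sAlphaMul_comul_comul_mul (h : H) (U : H ⊗[k] (H ⊗[k] H)) :
    Q.sAlphaMul.lTensor H
        (Algebra.TensorProduct.map (AlgHom.id k H) Q.comul (Q.comul h) * U)
      = (h ⊗ₜ 1) * Q.sAlphaMul.lTensor H U := by
  induction U using TensorProduct.induction_on with
  | zero => simp
  | add u v hu hv => rw [mul_add, map_add, hu, hv, map_add, mul_add]
  | tmul x w =>
    have hmap : ∀ u : H ⊗[k] H,
        Q.sAlphaMul.lTensor H (Algebra.TensorProduct.map (AlgHom.id k H) Q.comul u * (x ⊗ₜ w))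
          = TensorProduct.map (LinearMap.mulRight k x)
              (LinearMap.toSpanSingleton k H (Q.sAlphaMul w))
              (Algebra.TensorProduct.map (AlgHom.id k H) Q.counit u) := by
      intro u
      induction u using TensorProduct.induction_on with
      | zero => simp
      | tmul a b => simp [Algebra.TensorProduct.tmul_mul_tmul, sAlphaMul_comul_mul]
      | add p q hp hq => rw [map_add, add_mul, map_add, hp, hq, map_add, map_add]
    rw [hmap, Q.counit_right]
    simp [Algebra.TensorProduct.tmul_mul_tmul]

/-- `Δ(h₁) Δ(t) ⊗ h₂ = ε(h₁) Δ(t) ⊗ h₂`, as `t` is a left integral. -/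
theorem comul_tmul_eq_of_mem_leftIntegrals {t : H} (ht : t ∈ Q.leftIntegrals) (h : H) :
    Q.comul t ⊗ₜ h
      = Algebra.TensorProduct.map Q.comul (AlgHom.id k H) (Q.comul h) * (Q.comul t ⊗ₜ 1) := by
  have hmap : ∀ u : H ⊗[k] H,
      Algebra.TensorProduct.map Q.comul (AlgHom.id k H) u * (Q.comul t ⊗ₜ 1)
        = (LinearMap.toSpanSingleton k _ (Q.comul t)).rTensor H
            (Algebra.TensorProduct.map Q.counit (AlgHom.id k H) u) := by
    intro u
    induction u using TensorProduct.induction_on with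
    | zero => simp
    | tmul a b => simp [Algebra.TensorProduct.tmul_mul_tmul, ← map_mul, ht a]
    | add p q hp hq => rw [map_add, add_mul, map_add, hp, hq, map_add]
  rw [hmap, Q.counit_left]
  simp

theorem Tel_mul_one_tmul {t : H} (ht : t ∈ Q.leftIntegrals) (h : H) :
    Q.Tel t * (1 ⊗ₜ h) = (h ⊗ₜ 1) * Q.Tel t := by
  have hassoc :
      Algebra.TensorProduct.assoc k k k H H H (Q.comul t ⊗ₜ 1) * (1 ⊗ₜ (1 ⊗ₜ h))
      = Algebra.TensorProduct.assoc k k k H H H (Q.comul t ⊗ₜ h) := by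
    rw [← Algebra.TensorProduct.assoc_tmul (R := k) (S := k) (T := k), ← map_mul,
      Algebra.TensorProduct.tmul_mul_tmul, ← Algebra.TensorProduct.one_def, mul_one, one_mul]
  have hcoassoc : Q.Phi * Algebra.TensorProduct.assoc k k k H H H (Q.comul t ⊗ₜ 1)
        * (1 ⊗ₜ (1 ⊗ₜ h))
      = Algebra.TensorProduct.map (AlgHom.id k H) Q.comul (Q.comul h)
          * (Q.Phi * Algebra.TensorProduct.assoc k k k H H H (Q.comul t ⊗ₜ 1)) := by
    rw [mul_assoc, hassoc, Q.comul_tmul_eq_of_mem_leftIntegrals ht, map_mul, ← mul_assoc,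
      ← Q.quasi_coassoc h, mul_assoc]
  rw [Tel_eq_lTensor, lTensor_sAlphaMul_mul_one_tmul, hcoassoc,
    lTensor_sAlphaMul_comul_comul_mul]

theorem phiContract_mul_tmul_tmul_one (W : H ⊗[k] (H ⊗[k] H)) (c b : H) :
    Q.phiContract (W * (c ⊗ₜ (b ⊗ₜ 1))) = Q.phiContract (W * ((c * Q.S b) ⊗ₜ 1)) := by
  induction W using TensorProduct.induction_on with
  | zero => simp
  | tmul x w =>
    induction w using TensorProduct.induction_on with
    | zero => simp
    | tmul y z =>
      simp [Algebra.TensorProduct.tmul_mul_tmul, Algebra.TensorProduct.one_def, Q.S_mul,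
        mul_assoc]
    | add p q hp hq => simp only [TensorProduct.tmul_add, add_mul, map_add, hp, hq]
  | add u v hu hv => rw [add_mul, add_mul, map_add, map_add, hu, hv]

theorem betaMul_lTensor_sAlphaMul (V : H ⊗[k] (H ⊗[k] H)) :
    Q.betaMul (Q.sAlphaMul.lTensor H V) = Q.phiContract (V * (Q.beta ⊗ₜ 1)) := by
  induction V using TensorProduct.induction_on with
  | zero => simp
  | tmul x w => simp [Algebra.TensorProduct.tmul_mul_tmul, phiContract, mul_assoc]
  | add u v hu hv => rw [map_add, map_add, hu, hv, add_mul, map_add]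

theorem phiContract_Phi_mul_beta_tmul_one : Q.phiContract (Q.Phi * (Q.beta ⊗ₜ 1)) = 1 := by
  have hcontract : ∀ V : H ⊗[k] (H ⊗[k] H), Q.phiContract (V * (Q.beta ⊗ₜ 1))
      = LinearMap.mul' k H (TensorProduct.map LinearMap.id
          (LinearMap.mul' k H ∘ₗ TensorProduct.map
            (LinearMap.mulRight k Q.alpha ∘ₗ LinearMap.mulLeft k Q.beta ∘ₗ Q.S)
            LinearMap.id) V) := by
    intro V
    induction V using TensorProduct.induction_on with
    | zero => simp
    | tmul x w =>
      induction w using TensorProduct.induction_on with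
      | zero => simp
      | tmul y z =>
        simp [Algebra.TensorProduct.tmul_mul_tmul, Algebra.TensorProduct.one_def, mul_assoc]
      | add p q hp hq => simp only [TensorProduct.tmul_add, add_mul, map_add, hp, hq]
    | add u v hu hv => rw [add_mul, map_add, map_add, map_add, hu, hv]
  rw [hcontract, Q.antipode_Phi]

theorem betaMul_lTensor_sAlphaMul_Phi_mul_assoc (w : H ⊗[k] H) :
    Q.betaMul
        (Q.sAlphaMul.lTensor H (Q.Phi * Algebra.TensorProduct.assoc k k k H H H (w ⊗ₜ 1)))
      = Q.phiContract (Q.Phi *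
          (LinearMap.mul' k H (TensorProduct.map LinearMap.id
            (LinearMap.mulLeft k Q.beta ∘ₗ Q.S) w) ⊗ₜ 1)) := by
  rw [betaMul_lTensor_sAlphaMul]
  induction w using TensorProduct.induction_on with
  | zero => simp
  | tmul a b =>
    rw [Algebra.TensorProduct.assoc_tmul, mul_assoc, Algebra.TensorProduct.tmul_mul_tmul,
      mul_one, phiContract_mul_tmul_tmul_one]
    simp [mul_assoc]
  | add p q hp hq =>
    rw [TensorProduct.add_tmul, map_add, mul_add, add_mul, map_add, hp, hq, map_add, map_add,
      TensorProduct.add_tmul, mul_add, map_add]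

theorem betaMul_Tel (t : H) : Q.betaMul (Q.Tel t) = Q.counit t • 1 := by
  rw [Tel_eq_lTensor, betaMul_lTensor_sAlphaMul_Phi_mul_assoc, Q.antipode_right t,
    ← TensorProduct.smul_tmul', mul_smul_comm, map_smul, phiContract_Phi_mul_beta_tmul_one]

theorem betaMul_tmul_one_mul (a : H) (x : H ⊗[k] H) :
    Q.betaMul ((a ⊗ₜ 1) * x) = a * Q.betaMul x := by
  induction x using TensorProduct.induction_on with
  | zero => simp
  | tmul b c => simp [Algebra.TensorProduct.tmul_mul_tmul, mul_assoc]
  | add x y hx hy => rw [mul_add, map_add, hx, hy, map_add, mul_add]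

end QuasiHopfAlgebra

theorem finiteDimensional_of_semisimple_general {k H : Type*} [Field k]
    [Ring H] [Algebra k H] [IsSemisimpleRing H] (Q : QuasiHopfAlgebra k H) :
    FiniteDimensional k H := by
  obtain ⟨t, hεt, ht⟩ := IsSemisimpleRing.exists_mul_eq_smul_self_of_algHom Q.counit
  refine finiteDimensional_of_tmul_one_mul_eq_mul_one_tmul (Q.Tel t) Q.betaMul
    (fun h => (Q.Tel_mul_one_tmul ht h).symm) fun h => ?_
  rw [Q.betaMul_tmul_one_mul, Q.betaMul_Tel, hεt, one_smul, mul_one]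

/-- a semisimple quasi-Hopf algebra with bijective antipode is finite
dimensional. -/
theorem finiteDimensional_of_semisimple {k H : Type*} [Field k]
    [Ring H] [Algebra k H] [IsSemisimpleRing H] (Q : QuasiHopfAlgebra k H)
    (hS : Function.Bijective Q.S) :
    FiniteDimensional k H :=
  finiteDimensional_of_semisimple_general Q
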